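/- For all integers n ≥ 1 and 2 ≤ k ≤ ⌊n/2⌋: Σ_{i=1}^{n-1} C(n,i)·[C(n-k-1,k)·p(n-2k-1, n-i-k-1) + C(n-k-1,k-1)·p(n-2k, n-i-k)] = C(n-k,k)·C_{n-k}, where p(a,b) := C(a,b) - C(a,b-1) and C_m is the m-th Catalan number. -/

import Mathlib

/-!
Extend the sum to `0 ≤ i ≤ n`: the two new boundary terms vanish because `k ≥ 2`. Both inner
sums are then Chu–Vandermonde convolutions of the row `C(n, ·)` with a difference `p(b, ·)`, and
with `m = n - k` they collapse to `p(2m - 1, m - 1)` and `p(2m, m)`, both equal to the Catalan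
number `C_m`. Pascal's rule `C(m - 1, k) + C(m - 1, k - 1) = C(m, k)` finishes the proof. When
`n = 2k` the first convolution is not available (its row `n - 2k - 1` is negative), but then its
coefficient `C(k - 1, k)` vanishes.
-/

/-- The binomial coefficient `C(a,b)` for integer arguments, with the convention that
`C(a,b) = 0` unless `0 ≤ b ≤ a`. -/
def Cb (a b : ℤ) : ℚ :=
  if 0 ≤ b ∧ b ≤ a then (a.toNat.choose b.toNat : ℚ) else 0

/-- `p(a,b) := C(a,b) - C(a,b-1)`. -/
def pB (a b : ℤ) : ℚ := Cb a b - Cb a (b - 1)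

open Finset

@[simp]
theorem Cb_natCast (a b : ℕ) : Cb a b = a.choose b := by
  by_cases h : b ≤ a
  · simp [Cb, h]
  · simp [Cb, h, Nat.choose_eq_zero_of_lt (not_le.mp h)]

theorem Cb_of_neg {a b : ℤ} (h : b < 0) : Cb a b = 0 := by
  simp [Cb, not_le.mpr h]

theorem Cb_of_lt {a b : ℤ} (h : a < b) : Cb a b = 0 := by
  simp [Cb, not_le.mpr h]

theorem Cb_symm (a b : ℤ) : Cb a (a - b) = Cb a b := by
  by_cases h : 0 ≤ b ∧ b ≤ a
  · obtain ⟨hb, hba⟩ := h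
    lift a to ℕ using hb.trans hba
    lift b to ℕ using hb
    rw [← Nat.cast_sub (by exact_mod_cast hba), Cb_natCast, Cb_natCast,
      Nat.choose_symm (by exact_mod_cast hba)]
  · rcases not_and_or.mp h with h | h
    · rw [Cb_of_lt (by omega), Cb_of_neg (by omega)]
    · rw [Cb_of_neg (by omega), Cb_of_lt (by omega)]

theorem Cb_add_one {a : ℤ} (ha : 0 ≤ a) (b : ℤ) : Cb (a + 1) b = Cb a b + Cb a (b - 1) := by
  lift a to ℕ using ha
  rcases lt_or_ge b 0 with hb | hb
  · rw [Cb_of_neg hb, Cb_of_neg hb, Cb_of_neg (by omega), add_zero]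
  lift b to ℕ using hb
  cases b with
  | zero => simp [Cb, add_nonneg]
  | succ k =>
    rw [← Nat.cast_succ, Nat.cast_succ k, add_sub_cancel_right, ← Nat.cast_succ,
      Cb_natCast, Cb_natCast, Cb_natCast, Nat.choose_succ_succ', Nat.cast_add, add_comm]

theorem pB_of_neg {a b : ℤ} (h : b < 0) : pB a b = 0 := by
  rw [pB, Cb_of_neg h, Cb_of_neg (by omega), sub_zero]

theorem pB_of_lt {a b : ℤ} (h : a + 1 < b) : pB a b = 0 := by
  rw [pB, Cb_of_lt (by omega), Cb_of_lt (by omega), sub_zero]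

theorem Cb_vandermonde {a b : ℤ} (ha : 0 ≤ a) (hb : 0 ≤ b) (c : ℤ) :
    ∑ i ∈ Icc 0 a, Cb a i * Cb b (c - i) = Cb (a + b) c := by
  rcases lt_or_ge c 0 with hc | hc
  · rw [Cb_of_neg hc]
    exact sum_eq_zero fun i hi => mul_eq_zero_of_right _ (Cb_of_neg (by grind))
  lift a to ℕ using ha
  lift b to ℕ using hb
  lift c to ℕ using hc
  let f (i : ℕ) : ℚ := a.choose i * Cb b (c - i)
  have hf_of_gt_right (i : ℕ) (hi : c < i) : f i = 0 :=
    mul_eq_zero_of_right _ (Cb_of_neg (by omega))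
  have hf_of_gt_left (i : ℕ) (hi : a < i) : f i = 0 := by
    simp [f, Nat.choose_eq_zero_of_lt hi]
  calc ∑ i ∈ Icc 0 (a : ℤ), Cb a i * Cb b (c - i) = ∑ i ∈ range (a + 1), f i := by
        simp [Int.Icc_eq_finset_map, f]
    _ = ∑ i ∈ range (min a c + 1), f i := by
        refine (sum_subset (by simp) fun i hi hi' => hf_of_gt_right i ?_).symm
        simp only [mem_range] at hi hi'
        omega
    _ = ∑ i ∈ range (c + 1), f i := by
        refine sum_subset (by simp) fun i hi hi' => hf_of_gt_left i ?_
        simp only [mem_range] at hi hi'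
        omega
    _ = Cb (a + b : ℕ) c := by
        rw [Cb_natCast, Nat.add_choose_eq, Nat.sum_antidiagonal_eq_sum_range_succ_mk]
        push_cast
        refine sum_congr rfl fun i hi => ?_
        simp only [f]
        rw [← Nat.cast_sub (by simp only [mem_range] at hi; omega), Cb_natCast]
    _ = Cb (a + b) c := by push_cast; rfl

theorem pB_vandermonde {a b : ℤ} (ha : 0 ≤ a) (hb : 0 ≤ b) (c : ℤ) :
    ∑ i ∈ Icc 0 a, Cb a i * pB b (c - i) = pB (a + b) c := by
  simp only [pB, mul_sub, sum_sub_distrib, sub_right_comm _ _ (1 : ℤ), Cb_vandermonde ha hb]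

theorem pB_two_mul_self {m : ℤ} (hm : 0 ≤ m) : pB (2 * m) m = catalan m.toNat := by
  lift m to ℕ using hm
  rw [Int.toNat_natCast]
  cases m with
  | zero => simpa [pB, Cb_of_neg] using Cb_natCast 0 0
  | succ j =>
    have h_choose : ((2 * (j + 1)).choose (j + 1) : ℚ) * (j + 1)
        = (2 * (j + 1)).choose j * (j + 2) := by
      have := Nat.choose_succ_right_eq (2 * (j + 1)) j
      rw [show 2 * (j + 1) - j = j + 2 by omega] at this
      exact_mod_cast this
    have h_catalan : ((j : ℚ) + 2) * catalan (j + 1) = (2 * (j + 1)).choose (j + 1) := by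
      exact_mod_cast succ_mul_catalan_eq_centralBinom (j + 1)
    rw [pB, show (2 : ℤ) * ↑(j + 1) = ↑(2 * (j + 1)) by push_cast; ring, Nat.cast_succ,
      add_sub_cancel_right, ← Nat.cast_succ, Cb_natCast, Cb_natCast]
    apply mul_left_cancel₀ (show (j : ℚ) + 2 ≠ 0 by positivity)
    linear_combination h_choose - h_catalan

theorem pB_two_mul_sub_one {m : ℤ} (hm : 1 ≤ m) :
    pB (2 * m - 1) (m - 1) = catalan m.toNat := by
  have hpascal := Cb_add_one (a := 2 * m - 1) (by omega)
  rw [sub_add_cancel] at hpascal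
  rw [← pB_two_mul_self (by omega), pB, pB, hpascal, hpascal, ← Cb_symm (2 * m - 1) m,
    show 2 * m - 1 - m = m - 1 by ring]
  ring

theorem stmt12_general (n k : ℤ) (hk2 : 2 ≤ k) (hk : k ≤ n / 2) :
    ∑ i ∈ Finset.Icc 1 (n - 1),
        Cb n i * (Cb (n - k - 1) k * pB (n - 2 * k - 1) (n - i - k - 1)
          + Cb (n - k - 1) (k - 1) * pB (n - 2 * k) (n - i - k))
      = Cb (n - k) k * (catalan (n - k).toNat : ℚ) := by
  have h2k : 2 * k ≤ n := by omega
  rw [sum_subset (s₂ := Icc 0 n) (Icc_subset_Icc (by omega) (by omega)) fun i hi hi' => by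
    obtain rfl | rfl : i = 0 ∨ i = n := by simp only [mem_Icc] at hi hi'; omega
    · rw [pB_of_lt (by omega), pB_of_lt (by omega)]; ring
    · rw [pB_of_neg (by omega), pB_of_neg (by omega)]; ring]
  simp only [mul_add, sum_add_distrib, mul_left_comm (Cb n _), ← mul_sum]
  have h_even : ∑ i ∈ Icc 0 n, Cb n i * pB (n - 2 * k) (n - i - k) = catalan (n - k).toNat := by
    simp_rw [show ∀ i, n - i - k = n - k - i from fun i => by ring]
    rw [pB_vandermonde (by omega) (by omega), ← pB_two_mul_self (by omega)]
    congr 1; ring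
  have h_odd : Cb (n - k - 1) k * ∑ i ∈ Icc 0 n, Cb n i * pB (n - 2 * k - 1) (n - i - k - 1)
      = Cb (n - k - 1) k * catalan (n - k).toNat := by
    rcases h2k.eq_or_lt with h | h
    · rw [Cb_of_lt (by omega), zero_mul, zero_mul]
    simp_rw [show ∀ i, n - i - k - 1 = n - k - 1 - i from fun i => by ring]
    rw [pB_vandermonde (by omega) (by omega), ← pB_two_mul_sub_one (by omega)]
    congr 2; ring
  rw [h_odd, h_even, ← add_mul, ← Cb_add_one (by omega), sub_add_cancel]

/-- For `n ≥ 1` and `2 ≤ k ≤ ⌊n/2⌋`: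
`Σ_{i=1}^{n-1} C(n,i)[C(n-k-1,k) p(n-2k-1, n-i-k-1) + C(n-k-1,k-1) p(n-2k, n-i-k)]
  = C(n-k,k) C_{n-k}`, where `C_m` is the `m`-th Catalan number. -/
theorem stmt12 (n k : ℤ) (hn : 1 ≤ n) (hk2 : 2 ≤ k) (hk : k ≤ n / 2) :
    ∑ i ∈ Finset.Icc 1 (n - 1),
        Cb n i * (Cb (n - k - 1) k * pB (n - 2 * k - 1) (n - i - k - 1)
          + Cb (n - k - 1) (k - 1) * pB (n - 2 * k) (n - i - k))
      = Cb (n - k) k * (catalan (n - k).toNat : ℚ) :=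
  stmt12_general n k hk2 hk
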